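/- Let μ ∈ Λ and t ≥ 1 with t ≤ n−2 and 2t + |μ| ∈ {2n−2, 2n−1}. Then the t-fold application of the Pieri operator (quantum multiplication by τ_{(1,1)}) to τ_μ equals τ_{(μ₁+t+1, μ₂+t−1)} + τ_{(μ₁+t, μ₂+t)}. -/
import Mathlib

open Polynomial

def Lam (n : ℤ) : Set (ℤ × ℤ) :=
  {p | p.1 ≤ 2*n - 1 ∧ p.2 ≤ p.1 ∧ -1 ≤ p.2 ∧
       (n - 2 < p.1 → p.2 < p.1) ∧ (p.2 = -1 → p.1 = 2*n - 1)}

abbrev M := (ℤ × ℤ) →₀ Polynomial ℤ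

noncomputable def tau (l : ℤ × ℤ) : M := Finsupp.single l 1

/-- Pech's quantum Pieri rule for multiplication by τ_(1,1), on basis indices. -/
noncomputable def pieriFun (n : ℤ) : ℤ × ℤ → M := fun p =>
  if p.1 = 2*n - 1 then
    (if p.2 = 2*n - 3 then (X : Polynomial ℤ) • (tau (2*n-1, -1) + tau (2*n-2, 0))
     else (X : Polynomial ℤ) • tau (p.2 + 1, 0))
  else if p.1 + p.2 = 2*n - 4 ∨ p.1 + p.2 = 2*n - 3 then
    tau (p.1 + 2, p.2) + tau (p.1 + 1, p.2 + 1)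
  else tau (p.1 + 1, p.2 + 1)

/-- The Pieri operator: quantum multiplication by τ_(1,1). -/
noncomputable def P (n : ℤ) : M →ₗ[Polynomial ℤ] M :=
  Finsupp.linearCombination (Polynomial ℤ) (pieriFun n)

lemma P_tau (n : ℤ) (p : ℤ × ℤ) : P n (tau p) = pieriFun n p := by
  simp [P, tau, Finsupp.linearCombination_single]

lemma P_generic (n : ℤ) (p : ℤ × ℤ) (h1 : p.1 ≠ 2*n - 1)
    (h2 : ¬(p.1 + p.2 = 2*n - 4 ∨ p.1 + p.2 = 2*n - 3)) :
    P n (tau p) = tau (p.1 + 1, p.2 + 1) := by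
  rw [P_tau, pieriFun, if_neg h1, if_neg h2]

lemma P_boundary (n : ℤ) (p : ℤ × ℤ) (h1 : p.1 ≠ 2*n - 1)
    (h2 : p.1 + p.2 = 2*n - 4 ∨ p.1 + p.2 = 2*n - 3) :
    P n (tau p) = tau (p.1 + 2, p.2) + tau (p.1 + 1, p.2 + 1) := by
  rw [P_tau, pieriFun, if_neg h1, if_pos h2]

lemma P_iter (n : ℤ) (m : ℤ × ℤ) : ∀ k : ℕ,
    m.1 + m.2 + 2*(k : ℤ) ≤ 2*n - 3 → m.1 + (k : ℤ) ≤ 2*n - 2 →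
    (P n ^ k) (tau m) = tau (m.1 + (k : ℤ), m.2 + (k : ℤ)) := by
  intro k
  induction k with
  | zero => intro _ _; simp
  | succ j ih =>
    intro h1 h2
    push_cast at h1 h2 ⊢
    rw [pow_succ', Module.End.mul_apply, ih (by omega) (by omega),
      P_generic n (m.1 + j, m.2 + j) (by simp; omega) (by simp; omega)]
    congr 1
    simp only [Prod.mk.injEq]
    omega

theorem stmt7 (n : ℤ) (hn : 3 ≤ n) (m : ℤ × ℤ) (hm : m ∈ Lam n)
    (t : ℕ) (ht1 : 1 ≤ t) (ht2 : (t : ℤ) ≤ n - 2)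
    (hdeg : 2*(t : ℤ) + (m.1 + m.2) = 2*n - 2 ∨ 2*(t : ℤ) + (m.1 + m.2) = 2*n - 1) :
    (P n ^ t) (tau m) =
      tau (m.1 + (t : ℤ) + 1, m.2 + (t : ℤ) - 1) + tau (m.1 + (t : ℤ), m.2 + (t : ℤ)) := by
  obtain ⟨hA, hB, hC, hD, hE⟩ := hm
  obtain ⟨k, rfl⟩ : ∃ k, t = k + 1 := ⟨t - 1, by omega⟩
  push_cast at hdeg ht2 ⊢
  rw [pow_succ', Module.End.mul_apply,
    P_iter n m k (by omega) (by omega),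
    P_boundary n (m.1 + k, m.2 + k) (by simp; omega) (by simp; omega)]
  congr 2 <;> simp only [Prod.mk.injEq] <;> omega
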